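/- Let α be a nonempty finite linearly ordered set, regarded as a semigroup under the operation x*y = max(x, y) (for α = {1, …, n} this is the chain semigroup CH_n). Then the only Schur ring over this semigroup is the discrete one: if 𝒮 is a Schur ring over (α, max), then every block of 𝒮 is a singleton. -/

import Mathlib

open scoped Pointwise

/-- The simple quantity `[X] = ∑_{x ∈ X} x` in the semigroup algebra `MonoidAlgebra ℚ G`. -/
noncomputable def simpleQty {G : Type*} [Mul G] (X : Finset G) : MonoidAlgebra ℚ G :=
  ∑ x ∈ X, MonoidAlgebra.single x (1 : ℚ)

/-- A partition of `G` into nonempty finite blocks. -/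
def IsPartition {G : Type*} (S : Set (Set G)) : Prop :=
  (∀ X ∈ S, X.Nonempty ∧ X.Finite) ∧ ∀ x : G, ∃! X, X ∈ S ∧ x ∈ X

/-- The ℚ-linear span of the simple quantities of the blocks of `S`. -/
noncomputable def schurSpan {G : Type*} [Mul G] (S : Set (Set G)) :
    Submodule ℚ (MonoidAlgebra ℚ G) :=
  Submodule.span ℚ { z | ∃ X ∈ S, ∃ hX : X.Finite, z = simpleQty hX.toFinset }

/-- A Schur ring over the semigroup `G`. -/
def IsSchurRing {G : Type*} [Semigroup G] (S : Set (Set G)) : Prop :=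
  IsPartition S ∧ ∀ X ∈ S, ∀ Y ∈ S, ∀ (hX : X.Finite) (hY : Y.Finite),
    simpleQty hX.toFinset * simpleQty hY.toFinset ∈ schurSpan S

/-- `A` is an `S`-subset: a union of blocks of `S`. -/
def IsSUnion {G : Type*} (S : Set (Set G)) (A : Set G) : Prop :=
  ∀ X ∈ S, X ⊆ A ∨ X ∩ A = ∅

lemma simpleQty_apply {G : Type*} [Mul G] [DecidableEq G] (F : Finset G) (a : G) :
    (simpleQty F).coeff a = if a ∈ F then (1:ℚ) else 0 := by
  classical
  unfold simpleQty
  rw [MonoidAlgebra.coeff_sum, Finsupp.finset_sum_apply]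
  simp [MonoidAlgebra.coeff_single, Finsupp.single_apply]

lemma sq_apply {G : Type*} [Mul G] [DecidableEq G] (F : Finset G) (a : G) :
    (simpleQty F * simpleQty F).coeff a
      = (((F ×ˢ F).filter (fun p => p.1 * p.2 = a)).card : ℚ) := by
  classical
  rw [show simpleQty F * simpleQty F
      = ∑ p ∈ F ×ˢ F, MonoidAlgebra.single (p.1 * p.2) (1:ℚ) by
    rw [simpleQty, Finset.sum_mul_sum, Finset.sum_product]
    simp [MonoidAlgebra.single_mul_single]]
  rw [MonoidAlgebra.coeff_sum, Finsupp.finset_sum_apply]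
  simp [MonoidAlgebra.coeff_single, Finsupp.single_apply, Finset.sum_boole]

lemma span_const {G : Type*} [Mul G] (S : Set (Set G)) (hpart : IsPartition S)
    (z : MonoidAlgebra ℚ G) (hz : z ∈ schurSpan S)
    {X : Set G} (hX : X ∈ S) {x y : G} (hx : x ∈ X) (hy : y ∈ X) :
    z.coeff x = z.coeff y := by
  classical
  induction hz using Submodule.span_induction with
  | mem w hw =>
    obtain ⟨C, hC, hCfin, rfl⟩ := hw
    rw [simpleQty_apply, simpleQty_apply]
    have hiff : x ∈ C ↔ y ∈ C := by
      constructor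
      · intro hxC
        have hCX : C = X := (hpart.2 x).unique ⟨hC, hxC⟩ ⟨hX, hx⟩
        rw [hCX]; exact hy
      · intro hyC
        have hCX : C = X := (hpart.2 y).unique ⟨hC, hyC⟩ ⟨hX, hy⟩
        rw [hCX]; exact hx
    simp [Set.Finite.mem_toFinset, hiff]
  | zero => simp
  | add a b _ _ ha hb =>
    rw [MonoidAlgebra.coeff_add, Finsupp.add_apply, Finsupp.add_apply, ha, hb]
  | smul c a _ ha =>
    rw [MonoidAlgebra.coeff_smul_apply, MonoidAlgebra.coeff_smul_apply, ha]

/-- the only Schur ring over a finite nonempty chain semigroup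
(multiplication given by `max`) is the discrete one. -/
theorem chain_semigroup_discrete {α : Type*} [LinearOrder α] [Fintype α] [Nonempty α]
    [Semigroup α] (hmul : ∀ x y : α, x * y = max x y)
    (S : Set (Set α)) (hS : IsSchurRing S) :
    ∀ X ∈ S, ∃ x : α, X = {x} := by
  classical
  intro X hX
  obtain ⟨hne, hfin⟩ := hS.1.1 X hX
  set F : Finset α := hfin.toFinset with hF
  have hFne : F.Nonempty := by
    rw [hF, Set.Finite.toFinset_nonempty]; exact hne
  set m0 : α := F.min' hFne with hm0
  set M : α := F.max' hFne with hM
  have hm0X : m0 ∈ X := hfin.mem_toFinset.mp (F.min'_mem hFne)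
  have hMX : M ∈ X := hfin.mem_toFinset.mp (F.max'_mem hFne)
  have hsq : simpleQty F * simpleQty F ∈ schurSpan S := hS.2 X hX X hX hfin hfin
  have hc := span_const S hS.1 _ hsq hX hMX hm0X
  rw [sq_apply, sq_apply] at hc
  -- the filter at m0 is the singleton {(m0, m0)}
  have hmin : ((F ×ˢ F).filter (fun p => p.1 * p.2 = m0)) = {(m0, m0)} := by
    ext p
    simp only [Finset.mem_filter, Finset.mem_product, Finset.mem_singleton, hmul]
    constructor
    · rintro ⟨⟨h1, h2⟩, h3⟩
      have hp1 : p.1 = m0 :=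
        le_antisymm (le_trans (le_max_left p.1 p.2) (le_of_eq h3)) (F.min'_le p.1 h1)
      have hp2 : p.2 = m0 :=
        le_antisymm (le_trans (le_max_right p.1 p.2) (le_of_eq h3)) (F.min'_le p.2 h2)
      exact Prod.ext hp1 hp2
    · rintro rfl
      exact ⟨⟨F.min'_mem hFne, F.min'_mem hFne⟩, max_self m0⟩
  rw [hmin, Finset.card_singleton] at hc
  have hcard : ((F ×ˢ F).filter (fun p => p.1 * p.2 = M)).card = 1 := by
    exact_mod_cast hc
  -- conclude m0 = M
  have hm0M : m0 = M := by
    by_contra hne'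
    have hmem1 : (M, m0) ∈ (F ×ˢ F).filter (fun p => p.1 * p.2 = M) := by
      simp only [Finset.mem_filter, Finset.mem_product, hmul]
      exact ⟨⟨F.max'_mem hFne, F.min'_mem hFne⟩,
        max_eq_left (F.min'_le M (F.max'_mem hFne))⟩
    have hmem2 : (M, M) ∈ (F ×ˢ F).filter (fun p => p.1 * p.2 = M) := by
      simp only [Finset.mem_filter, Finset.mem_product, hmul]
      exact ⟨⟨F.max'_mem hFne, F.max'_mem hFne⟩, max_self M⟩
    have : 1 < ((F ×ˢ F).filter (fun p => p.1 * p.2 = M)).card :=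
      Finset.one_lt_card.mpr ⟨(M, m0), hmem1, (M, M), hmem2, by
        intro h
        have := congrArg Prod.snd h
        simp only at this
        exact hne' this⟩
    omega
  refine ⟨M, ?_⟩
  ext x
  constructor
  · intro hxX
    have hxF : x ∈ F := hfin.mem_toFinset.mpr hxX
    have h1 : m0 ≤ x := F.min'_le x hxF
    have h2 : x ≤ M := F.le_max' x hxF
    have : x = M := le_antisymm h2 (hm0M ▸ h1)
    simpa using this
  · intro hx
    simp only [Set.mem_singleton_iff] at hx
    rw [hx]; exact hMX
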